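/- arXiv:2208.13308 — 4 statements merged into one kernel-verified Lean document; each statement's English description precedes it below -/
import Mathlib

section
/- Let n ≥ 1, let f ∈ Q₀ⁿ, and suppose there exists a ∈ [e^{−n}, 1] such that a·‖f‖_∞·1_{B₂ⁿ}(x) ≤ f(x) for all x ∈ ℝⁿ, where B₂ⁿ is the closed Euclidean unit ball centered at the origin (this holds in particular when f is in John's position). Then for every t > 0 and every x ∈ ℝⁿ, sup_{y : |y−x| ≤ t} f(y) ≤ e^{n·t} · f(x/(1+t)). -/
open MeasureTheory

noncomputable section

/-- `ℝⁿ` with its Euclidean structure. -/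
abbrev Eucl (n : ℕ) := EuclideanSpace ℝ (Fin n)

/-- `f : ℝⁿ → [0,∞)` is log-concave:
`f(tx+(1−t)y) ≥ f(x)^t · f(y)^(1−t)` for all `x, y` and `t ∈ (0,1)`. -/
def IsLogConcave {n : ℕ} (f : Eucl n → ℝ) : Prop :=
  ∀ x y : Eucl n, ∀ t : ℝ, 0 < t → t < 1 →
    f x ^ t * f y ^ (1 - t) ≤ f (t • x + (1 - t) • y)

/-- The class `Q₀ⁿ`: nonnegative, log-concave, upper semicontinuous, integrable
functions with positive integral. -/
def MemQ0 {n : ℕ} (f : Eucl n → ℝ) : Prop :=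
  (∀ x, 0 ≤ f x) ∧ IsLogConcave f ∧ UpperSemicontinuous f ∧
    Integrable f ∧ 0 < ∫ x, f x

/-- `‖f‖_∞ = sup f`. -/
def supNorm {n : ℕ} (f : Eucl n → ℝ) : ℝ := ⨆ x, f x

/-- `‖f‖_p = (∫ f^p)^(1/p)`. -/
def lpNorm {n : ℕ} (p : ℝ) (f : Eucl n → ℝ) : ℝ := (∫ x, f x ^ p) ^ (1 / p)

/-- `‖P_H f‖_{L¹(H)} = ∫_H sup_{z ∈ H⊥} f(y+z) dλ_H(y)`, the `L¹(H)`-norm of the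
projection of `f` onto the subspace `H` (with the Lebesgue measure on `H` induced
by the Euclidean structure). -/
def projL1 {n : ℕ} (f : Eucl n → ℝ) (H : Submodule ℝ (Eucl n)) : ℝ :=
  ∫ y : H, ⨆ z : Hᗮ, f ((y : Eucl n) + (z : Eucl n))

/-- `‖S_H f‖_{L¹(H)} = ∫_H f dλ_H`, the integral of the section `f|_H`. -/
def sectL1 {n : ℕ} (f : Eucl n → ℝ) (H : Submodule ℝ (Eucl n)) : ℝ :=
  ∫ y : H, f (y : Eucl n)

/-!
Given `|y - x| ≤ t`, the point `z = (x - y)/t` lies in the unit ball and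
`x/(1+t) = s y + (1 - s) z` with `s = 1/(1+t)`.
On the ball `f ≥ e^{-n} ‖f‖_∞ ≥ e^{-n} f(y)`, so log-concavity gives
`f(x/(1+t)) ≥ f(y)^s (e^{-n} f(y))^{1-s} = e^{-n t/(1+t)} f(y)`.
The only analytic input is that `f` is bounded, so that `‖f‖_∞ ≥ f(y)`: averaging
`f((w + y)/2) ≥ √(f w) √(f y)` over `w` bounds `√(f y)` by a multiple of `∫ f / ∫ √f`.
-/

theorem lintegral_comp_smul {E : Type*} [NormedAddCommGroup E] [NormedSpace ℝ E]
    [MeasurableSpace E] [BorelSpace E] [FiniteDimensional ℝ E] (μ : Measure E)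
    [μ.IsAddHaarMeasure] (g : E → ENNReal) {R : ℝ} (hR : R ≠ 0) :
    ∫⁻ x, g (R • x) ∂μ = ENNReal.ofReal |(R ^ Module.finrank ℝ E)⁻¹| * ∫⁻ x, g x ∂μ := by
  rw [← smul_eq_mul, ← lintegral_smul_measure, ← Measure.map_addHaar_smul μ hR]
  exact (lintegral_map_equiv g
    (Homeomorph.smul (isUnit_iff_ne_zero.2 hR).unit).toMeasurableEquiv).symm

namespace IsLogConcave

variable {n : ℕ} {f : Eucl n → ℝ}

theorem sqrt_mul_sqrt_le (hf : IsLogConcave f) (x y : Eucl n) :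
    √(f x) * √(f y) ≤ f ((2⁻¹ : ℝ) • (x + y)) := by
  have h := hf x y 2⁻¹ (by norm_num) (by norm_num)
  rw [show (1 : ℝ) - 2⁻¹ = 2⁻¹ by norm_num, ← smul_add] at h
  simpa only [Real.sqrt_eq_rpow, one_div] using h

theorem sqrt_mul_lintegral_sqrt_le (hf : IsLogConcave f) (y : Eucl n) :
    ENNReal.ofReal √(f y) * (ENNReal.ofReal (2 ^ n)⁻¹ * ∫⁻ x, ENNReal.ofReal √(f x)) ≤
      ∫⁻ x, ENNReal.ofReal (f x) := by
  have hscale : ∫⁻ z, ENNReal.ofReal √(f ((2 : ℝ) • z - y)) =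
      ENNReal.ofReal (2 ^ n)⁻¹ * ∫⁻ x, ENNReal.ofReal √(f x) := by
    rw [lintegral_comp_smul volume (fun w ↦ ENNReal.ofReal √(f (w - y))) two_ne_zero,
      lintegral_sub_right_eq_self (fun w ↦ ENNReal.ofReal √(f w)) y, finrank_euclideanSpace_fin,
      abs_of_pos (by positivity)]
  rw [← hscale, ← lintegral_const_mul' _ _ ENNReal.ofReal_ne_top]
  refine lintegral_mono fun z ↦ ?_
  rw [← ENNReal.ofReal_mul (Real.sqrt_nonneg _)]
  refine ENNReal.ofReal_le_ofReal ?_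
  have hmid : (2⁻¹ : ℝ) • ((2 : ℝ) • z - y + y) = z := by module
  simpa only [mul_comm, hmid] using hf.sqrt_mul_sqrt_le ((2 : ℝ) • z - y) y

theorem bddAbove_range (hf : IsLogConcave f) (hint : Integrable f) (hpos : 0 < ∫ x, f x) :
    BddAbove (Set.range f) := by
  set D := ENNReal.ofReal (2 ^ n)⁻¹ * ∫⁻ x, ENNReal.ofReal √(f x)
  set J := ∫⁻ x, ENNReal.ofReal (f x)
  have hD : D ≠ 0 := by
    refine mul_ne_zero (ENNReal.ofReal_pos.2 (by positivity)).ne' fun hzero ↦ hpos.not_ge ?_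
    have hsqrt := (lintegral_eq_zero_iff' hint.aemeasurable.sqrt.ennreal_ofReal).1 hzero
    refine integral_nonpos_of_ae (hsqrt.mono fun x hx ↦ ?_)
    exact Real.sqrt_eq_zero'.1 (le_antisymm (ENNReal.ofReal_eq_zero.1 hx) (Real.sqrt_nonneg _))
  have hJ : J ≠ ⊤ := hint.lintegral_lt_top.ne
  refine ⟨(J / D).toReal ^ 2, ?_⟩
  rintro _ ⟨y, rfl⟩
  have hy : √(f y) ≤ (J / D).toReal :=
    (ENNReal.ofReal_le_iff_le_toReal (ENNReal.div_ne_top hJ hD)).1 <|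
      (ENNReal.le_div_iff_mul_le (Or.inl hD) (Or.inr hJ)).2 (hf.sqrt_mul_lintegral_sqrt_le y)
  calc f y ≤ √(f y) ^ 2 := Real.sq_sqrt' ▸ le_max_left _ _
    _ ≤ (J / D).toReal ^ 2 := pow_le_pow_left₀ (Real.sqrt_nonneg _) hy 2

theorem rpow_mul_le (hf : IsLogConcave f) {y z : Eucl n} {c s : ℝ} (hy : 0 ≤ f y) (hc : 0 ≤ c)
    (hyz : c * f y ≤ f z) (hs0 : 0 < s) (hs1 : s < 1) :
    c ^ (1 - s) * f y ≤ f (s • y + (1 - s) • z) :=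
  calc c ^ (1 - s) * f y = f y ^ s * (c * f y) ^ (1 - s) := by
        rw [Real.mul_rpow hc hy, mul_left_comm, ← Real.rpow_add' hy (by norm_num),
          add_sub_cancel, Real.rpow_one]
    _ ≤ f y ^ s * f z ^ (1 - s) := by gcongr
    _ ≤ f (s • y + (1 - s) • z) := hf y z s hs0 hs1

theorem le_exp_mul_of_mem_closedBall (hf : IsLogConcave f) (h0 : ∀ x, 0 ≤ f x) {c : ℝ} (hc : 0 ≤ c)
    (hball : ∀ y, ∀ z ∈ Metric.closedBall (0 : Eucl n) 1, Real.exp (-c) * f y ≤ f z)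
    {t : ℝ} (ht : 0 < t) {x y : Eucl n} (hy : y ∈ Metric.closedBall x t) :
    f y ≤ Real.exp (c * t) * f ((1 + t)⁻¹ • x) := by
  set s := (1 + t)⁻¹
  have hs0 : 0 < s := by positivity
  have hs1 : s < 1 := inv_lt_one_of_one_lt₀ (by linarith)
  have h1s : 1 - s = t * s := by simp only [s]; field_simp; ring
  set z := t⁻¹ • (x - y)
  have hz : z ∈ Metric.closedBall (0 : Eucl n) 1 := by
    rw [mem_closedBall_zero_iff, norm_smul, norm_inv, Real.norm_of_nonneg ht.le,
      inv_mul_le_one₀ ht, ← dist_eq_norm, dist_comm]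
    exact hy
  have hcomb : s • y + (1 - s) • z = s • x := by
    rw [smul_smul, show (1 - s) * t⁻¹ = s by rw [h1s]; field_simp]
    module
  have key := hf.rpow_mul_le (h0 y) (Real.exp_pos _).le (hball y z hz) hs0 hs1
  rw [hcomb, ← Real.exp_mul] at key
  have hexp : c * (1 - s) ≤ c * t := by
    gcongr
    rw [h1s]
    exact mul_le_of_le_one_right ht.le hs1.le
  calc f y = Real.exp (c * (1 - s)) * (Real.exp (-c * (1 - s)) * f y) := by
        rw [← mul_assoc, ← Real.exp_add, neg_mul, add_neg_cancel, Real.exp_zero, one_mul]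
    _ ≤ Real.exp (c * t) * f (s • x) := by have := h0 y; gcongr

end IsLogConcave

theorem sup_ball_le_of_john_position_general (n : ℕ)
    (f : Eucl n → ℝ) (hf : MemQ0 f)
    (hJohn : ∃ a : ℝ, a ∈ Set.Icc (Real.exp (-(n : ℝ))) 1 ∧
      ∀ x : Eucl n,
        a * supNorm f * (Metric.closedBall (0 : Eucl n) 1).indicator
          (fun _ => (1 : ℝ)) x ≤ f x) :
    ∀ t : ℝ, 0 < t → ∀ x : Eucl n,
      (⨆ y ∈ Metric.closedBall x t, f y) ≤
        Real.exp ((n : ℝ) * t) * f ((1 + t)⁻¹ • x) := by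
  obtain ⟨h0, hlc, -, hint, hpos⟩ := hf
  obtain ⟨a, ⟨ha, -⟩, hJ⟩ := hJohn
  have hball : ∀ y, ∀ z ∈ Metric.closedBall (0 : Eucl n) 1,
      Real.exp (-(n : ℝ)) * f y ≤ f z := fun y z hz ↦
    calc Real.exp (-(n : ℝ)) * f y ≤ a * supNorm f :=
          mul_le_mul ha (le_ciSup (hlc.bddAbove_range hint hpos) y) (h0 y)
            ((Real.exp_pos _).le.trans ha)
      _ ≤ f z := by simpa [Set.indicator_of_mem hz] using hJ z
  intro t ht x
  have hrhs : 0 ≤ Real.exp ((n : ℝ) * t) * f ((1 + t)⁻¹ • x) := by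
    have := h0 ((1 + t)⁻¹ • x); positivity
  exact Real.iSup_le (fun y ↦ Real.iSup_le
    (fun hy ↦ hlc.le_exp_mul_of_mem_closedBall h0 n.cast_nonneg hball ht hy) hrhs) hrhs

/-- For `f ∈ Q₀ⁿ` dominating `a·‖f‖_∞·1_{B₂ⁿ}` for some `a ∈ [e^{−n}, 1]`
(e.g. for `f` in John's position), one has
`sup_{|y−x| ≤ t} f(y) ≤ e^{nt} · f(x/(1+t))` for all `t > 0` and `x`. -/
theorem sup_ball_le_of_john_position (n : ℕ) (hn : 1 ≤ n)
    (f : Eucl n → ℝ) (hf : MemQ0 f)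
    (hJohn : ∃ a : ℝ, a ∈ Set.Icc (Real.exp (-(n : ℝ))) 1 ∧
      ∀ x : Eucl n,
        a * supNorm f * (Metric.closedBall (0 : Eucl n) 1).indicator
          (fun _ => (1 : ℝ)) x ≤ f x) :
    ∀ t : ℝ, 0 < t → ∀ x : Eucl n,
      (⨆ y ∈ Metric.closedBall x t, f y) ≤
        Real.exp ((n : ℝ) * t) * f ((1 + t)⁻¹ • x) :=
  sup_ball_le_of_john_position_general n f hf hJohn
end
end

section
/- Let n ≥ 1, let 1 ≤ k ≤ n−1, and let f₁, f₂ ∈ Q₀ⁿ. If ‖P_H f₁‖_{L¹(H)} ≤ ‖P_H f₂‖_{L¹(H)} for every k-dimensional linear subspace H ⊆ ℝⁿ, then for every invertible linear map A : ℝⁿ → ℝⁿ one also has ‖P_H (Af₁)‖_{L¹(H)} ≤ ‖P_H (Af₂)‖_{L¹(H)} for every k-dimensional linear subspace H ⊆ ℝⁿ, where Af(x) := f(A^{−1}x). -/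
/-!
An invertible linear map `B` carries each fibre `y + Hᗮ` of the orthogonal projection onto `H`
onto the fibre `e y + B Hᗮ` of the orthogonal projection onto `H' = (B Hᗮ)ᗮ`, where `e y` is the
orthogonal projection of `B y` onto `H'`. Hence `P_H (f ∘ B) = (P_{H'} f) ∘ e` for the linear
isomorphism `e : H ≃ H'`, and since both Lebesgue measures are Haar measures, changing variables
along `e` gives `‖P_H (f ∘ B)‖ = c ‖P_{H'} f‖` with `c ≥ 0` and `H'` independent of `f`. As
`dim H' = dim H`, the Shephard condition for `f₁, f₂` on `H'` transfers to `f₁ ∘ B, f₂ ∘ B` on `H`.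
-/

open MeasureTheory

noncomputable section

open Module Submodule
open scoped NNReal

section Transfer

variable {E F : Type*} [NormedAddCommGroup E] [InnerProductSpace ℝ E] [FiniteDimensional ℝ E]
  [NormedAddCommGroup F] [InnerProductSpace ℝ F] (B : E ≃ₗ[ℝ] F) (H : Submodule ℝ E)

theorem injective_orthogonalProjectionOnto_comp_restrict :
    Function.Injective ((Hᗮ.map (B : E →ₗ[ℝ] F))ᗮ.orthogonalProjectionOnto.toLinearMap ∘ₗ
      (B : E →ₗ[ℝ] F) ∘ₗ H.subtype) := by
  rw [← LinearMap.ker_eq_bot, LinearMap.ker_eq_bot']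
  intro y hy
  have hBy : B y ∈ Hᗮ.map (B : E →ₗ[ℝ] F) :=
    orthogonal_orthogonal (Hᗮ.map (B : E →ₗ[ℝ] F)) ▸ orthogonalProjectionOnto_eq_zero_iff.mp hy
  have hy' : (y : E) ∈ Hᗮ := B.symm_apply_apply (y : E) ▸ (mem_map_equiv _).mp hBy
  exact Subtype.ext (H.inf_orthogonal_eq_bot.le ⟨y.2, hy'⟩)

variable [FiniteDimensional ℝ F]

theorem finrank_orthogonal_map_orthogonal :
    finrank ℝ (Hᗮ.map (B : E →ₗ[ℝ] F))ᗮ = finrank ℝ H := by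
  have hmap := LinearEquiv.finrank_map_eq B Hᗮ
  have hE := H.finrank_add_finrank_orthogonal
  have hF := (Hᗮ.map (B : E →ₗ[ℝ] F)).finrank_add_finrank_orthogonal
  rw [← B.finrank_eq] at hF
  omega

def orthogonalTransfer : H ≃ₗ[ℝ] (Hᗮ.map (B : E →ₗ[ℝ] F))ᗮ :=
  LinearMap.linearEquivOfInjective _ (injective_orthogonalProjectionOnto_comp_restrict B H)
    (finrank_orthogonal_map_orthogonal B H).symm

theorem sub_orthogonalTransfer_mem (y : H) :
    B y - orthogonalTransfer B H y ∈ Hᗮ.map (B : E →ₗ[ℝ] F) := by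
  have h := sub_starProjection_mem_orthogonal (K := (Hᗮ.map (B : E →ₗ[ℝ] F))ᗮ) (B y)
  rwa [orthogonal_orthogonal] at h

theorem iSup_comp_add_orthogonal {α : Type*} [SupSet α] (g : F → α) (y : H) :
    ⨆ z : Hᗮ, g (B (y + z)) = ⨆ w : Hᗮ.map (B : E →ₗ[ℝ] F), g (orthogonalTransfer B H y + w) := by
  let shift : Hᗮ ≃ Hᗮ.map (B : E →ₗ[ℝ] F) :=
    (B.submoduleMap Hᗮ).toEquiv.trans (Equiv.addRight ⟨_, sub_orthogonalTransfer_mem B H y⟩)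
  refine Equiv.iSup_congr shift fun z => congrArg g ?_
  simp only [shift, Equiv.trans_apply, Equiv.coe_addRight, LinearEquiv.coe_toEquiv,
    Submodule.coe_add, LinearEquiv.submoduleMap_apply, map_add]
  abel

end Transfer

theorem exists_integral_comp_linearEquiv {V W G : Type*}
    [NormedAddCommGroup V] [NormedSpace ℝ V] [FiniteDimensional ℝ V] [MeasurableSpace V]
    [BorelSpace V] [NormedAddCommGroup W] [NormedSpace ℝ W] [MeasurableSpace W]
    [BorelSpace W] [NormedAddCommGroup G] [NormedSpace ℝ G]
    (μ : Measure V) [μ.IsAddHaarMeasure] (ν : Measure W) [ν.IsAddHaarMeasure] (e : V ≃ₗ[ℝ] W) :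
    ∃ c : ℝ≥0, ∀ g : W → G, ∫ v, g (e v) ∂μ = c • ∫ w, g w ∂ν := by
  have := e.finiteDimensional
  let eL := e.toContinuousLinearEquiv
  refine ⟨Measure.addHaarScalarFactor (μ.map eL) ν, fun g => ?_⟩
  rw [← integral_smul_nnreal_measure, ← Measure.isAddLeftInvariant_eq_smul]
  exact (integral_map_equiv eL.toHomeomorph.toMeasurableEquiv g).symm

theorem projL1_comp_linearEquiv {n : ℕ} (B : Eucl n ≃ₗ[ℝ] Eucl n) (H : Submodule ℝ (Eucl n)) :
    ∃ c : ℝ≥0, ∀ f : Eucl n → ℝ,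
      projL1 (fun x => f (B x)) H = c * projL1 f (Hᗮ.map (B : Eucl n →ₗ[ℝ] Eucl n))ᗮ := by
  obtain ⟨c, hc⟩ :=
    exists_integral_comp_linearEquiv (G := ℝ) volume volume (orthogonalTransfer B H)
  refine ⟨c, fun f => ?_⟩
  rw [projL1, projL1, orthogonal_orthogonal]
  simp only [iSup_comp_add_orthogonal B H f]
  rw [hc fun u => ⨆ w : Hᗮ.map (B : Eucl n →ₗ[ℝ] Eucl n), f (u + w), NNReal.smul_def,
    smul_eq_mul]

theorem shephard_condition_linear_invariant_general (n k : ℕ) (f₁ f₂ : Eucl n → ℝ)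
    (hcond : ∀ H : Submodule ℝ (Eucl n), Module.finrank ℝ H = k →
      projL1 f₁ H ≤ projL1 f₂ H)
    (A : Eucl n ≃ₗ[ℝ] Eucl n) :
    ∀ H : Submodule ℝ (Eucl n), Module.finrank ℝ H = k →
      projL1 (fun x => f₁ (A.symm x)) H ≤ projL1 (fun x => f₂ (A.symm x)) H := by
  intro H hH
  obtain ⟨c, hc⟩ := projL1_comp_linearEquiv A.symm H
  rw [hc f₁, hc f₂]
  gcongr
  exact hcond _ (by rw [finrank_orthogonal_map_orthogonal, hH])

/-- **Lemma 4.4**: the Shephard condition is invariant under nondegenerate linear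
transformations: if `‖P_H f₁‖_{L¹(H)} ≤ ‖P_H f₂‖_{L¹(H)}` for every `k`-dimensional
subspace `H`, then the same holds for the linear images `Af₁, Af₂`,
where `Af(x) := f(A⁻¹x)`. -/
theorem shephard_condition_linear_invariant (n k : ℕ) (hn : 1 ≤ n)
    (hk1 : 1 ≤ k) (hk2 : k ≤ n - 1)
    (f₁ f₂ : Eucl n → ℝ) (hf₁ : MemQ0 f₁) (hf₂ : MemQ0 f₂)
    (hcond : ∀ H : Submodule ℝ (Eucl n), Module.finrank ℝ H = k →
      projL1 f₁ H ≤ projL1 f₂ H)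
    (A : Eucl n ≃ₗ[ℝ] Eucl n) :
    ∀ H : Submodule ℝ (Eucl n), Module.finrank ℝ H = k →
      projL1 (fun x => f₁ (A.symm x)) H ≤ projL1 (fun x => f₂ (A.symm x)) H :=
  shephard_condition_linear_invariant_general n k f₁ f₂ hcond A
end
end

section
/- Let n ≥ 2, let 1 ≤ k ≤ n−1, and let f ∈ Q₀ⁿ. Then ‖f‖₁^{k/n} · ‖f‖_∞^{(n−k)/n} ≤ (n/k)^k · ‖f‖_{n/k}, and moreover (n/k)^k ≤ e^{n−k}, so that ‖f‖₁^{k/n} · ‖f‖_∞^{(n−k)/n} ≤ e^{n−k} · ‖f‖_{n/k}. -/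
open MeasureTheory

noncomputable section

/-! Write `q = k/n` and `p = 1/q = n/k`. For any `x₀`, log-concavity gives
`f (q x + (1-q) x₀) ^ p ≥ f x * f x₀ ^ (p-1)`; integrating in `x` and undoing the dilation by `q`
(Jacobian `q^n`) yields `‖f‖_p^p ≥ q^n f(x₀)^(p-1) ‖f‖₁`. Letting `f x₀` approach `sup f` and taking
`q`-th roots gives the first inequality, with constant `q^(-nq) = (n/k)^k`. The second one is
`n/k ≤ exp (n/k - 1)` raised to the power `k`. -/

open Real Set

theorem lpNorm_nonneg {n : ℕ} {f : Eucl n → ℝ} (hf0 : ∀ x, 0 ≤ f x) (p : ℝ) :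
    0 ≤ lpNorm p f :=
  rpow_nonneg (integral_nonneg fun x => rpow_nonneg (hf0 x) p) _

theorem IsLogConcave.mul_rpow_le_rpow {n : ℕ} {f : Eucl n → ℝ} (hf : IsLogConcave f)
    (hf0 : ∀ x, 0 ≤ f x) {q : ℝ} (hq0 : 0 < q) (hq1 : q < 1) (x x₀ : Eucl n) :
    f x * f x₀ ^ (q⁻¹ - 1) ≤ f (q • x + (1 - q) • x₀) ^ q⁻¹ :=
  calc f x * f x₀ ^ (q⁻¹ - 1) = (f x ^ q * f x₀ ^ (1 - q)) ^ q⁻¹ := by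
        rw [mul_rpow (rpow_nonneg (hf0 x) q) (rpow_nonneg (hf0 x₀) _),
          rpow_rpow_inv (hf0 x) hq0.ne', ← rpow_mul (hf0 x₀), sub_mul, one_mul,
          mul_inv_cancel₀ hq0.ne']
    _ ≤ f (q • x + (1 - q) • x₀) ^ q⁻¹ :=
        rpow_le_rpow (by have := hf0 x; have := hf0 x₀; positivity)
          (hf x x₀ q hq0 hq1) (inv_pos.2 hq0).le

theorem integral_comp_smul_add {n : ℕ} (g : Eucl n → ℝ) {q : ℝ} (hq : 0 < q) (c : Eucl n) :
    ∫ x, g (q • x + c) = (q ^ n)⁻¹ * ∫ x, g x := by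
  have := Measure.integral_comp_smul_of_nonneg volume (fun y => g (y + c)) q (hR := hq.le)
  simpa only [finrank_euclideanSpace_fin, smul_eq_mul, integral_add_right_eq_self] using this

theorem MeasureTheory.Integrable.rpow_of_le {α : Type*} [MeasurableSpace α] {μ : Measure α}
    {f : α → ℝ} (hf : Integrable f μ) (hf0 : ∀ x, 0 ≤ f x) {M : ℝ} (hM : ∀ x, f x ≤ M)
    {p : ℝ} (hp : 1 ≤ p) : Integrable (fun x => f x ^ p) μ := by
  refine (hf.const_mul (M ^ (p - 1))).mono'
    ((continuous_rpow_const (by linarith)).comp_aestronglyMeasurable hf.1) (.of_forall ?_)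
  intro x
  rw [norm_of_nonneg (rpow_nonneg (hf0 x) p)]
  calc f x ^ p = f x ^ (p - 1) * f x := by
        rw [← rpow_add_one' (hf0 x) (by linarith), sub_add_cancel]
    _ ≤ M ^ (p - 1) * f x :=
        mul_le_mul_of_nonneg_right (rpow_le_rpow (hf0 x) (hM x) (by linarith)) (hf0 x)


theorem IsLogConcave.inv_pow_mul_rpow_mul_integral_le {n : ℕ} {f : Eucl n → ℝ}
    (hf : IsLogConcave f) (hf0 : ∀ x, 0 ≤ f x) (hint : Integrable f) {p : ℝ} (hp : 1 < p)
    (hint_p : Integrable (fun x => f x ^ p)) (x₀ : Eucl n) :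
    p⁻¹ ^ n * f x₀ ^ (p - 1) * ∫ x, f x ≤ ∫ x, f x ^ p := by
  have hq0 : 0 < p⁻¹ := inv_pos.2 (by linarith)
  set c := (1 - p⁻¹) • x₀
  have hcomp : Integrable (fun x => f (p⁻¹ • x + c) ^ p) :=
    (hint_p.comp_add_right c).comp_smul hq0.ne'
  have hpt (x : Eucl n) : f x * f x₀ ^ (p - 1) ≤ f (p⁻¹ • x + c) ^ p := by
    simpa only [inv_inv] using hf.mul_rpow_le_rpow hf0 hq0 (inv_lt_one_of_one_lt₀ hp) x x₀
  calc p⁻¹ ^ n * f x₀ ^ (p - 1) * ∫ x, f x = p⁻¹ ^ n * ∫ x, f x * f x₀ ^ (p - 1) := by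
        rw [integral_mul_const]; ring
    _ ≤ p⁻¹ ^ n * ∫ x, f (p⁻¹ • x + c) ^ p := by
        gcongr p⁻¹ ^ n * ?_; exact integral_mono (hint.mul_const _) hcomp hpt
    _ = ∫ x, f x ^ p := by
        rw [integral_comp_smul_add (f · ^ p) hq0, mul_inv_cancel_left₀ (pow_pos hq0 n).ne']

theorem IsLogConcave.integral_rpow_mul_supNorm_rpow_le {n : ℕ} {f : Eucl n → ℝ}
    (hf : IsLogConcave f) (hf0 : ∀ x, 0 ≤ f x) (hint : Integrable f) {p : ℝ} (hp : 1 < p) :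
    (∫ x, f x) ^ p⁻¹ * supNorm f ^ (1 - p⁻¹) ≤ p ^ (n / p) * lpNorm p f := by
  have hp0 : 0 < p := by linarith
  have hq1 : p⁻¹ < 1 := inv_lt_one_of_one_lt₀ hp
  have hI : 0 ≤ ∫ x, f x := integral_nonneg hf0
  have hrhs : 0 ≤ p ^ (n / p) * lpNorm p f := mul_nonneg (by positivity) (lpNorm_nonneg hf0 p)
  by_cases hbdd : BddAbove (range f)
  swap
  · rwa [supNorm, Real.iSup_of_not_bddAbove hbdd, zero_rpow (by linarith), mul_zero]
  set M := supNorm f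
  have hle (x : Eucl n) : f x ≤ M := le_ciSup hbdd x
  have hM : 0 ≤ M := (hf0 0).trans (hle 0)
  have hpt := hf.inv_pow_mul_rpow_mul_integral_le hf0 hint hp (hint.rpow_of_le hf0 hle hp.le)
  -- the levels `t` obeying the pointwise bound form a closed set, which thus contains `sup f`
  have hsup : M ∈ {t | p⁻¹ ^ n * t ^ (p - 1) * ∫ x, f x ≤ ∫ x, f x ^ p} :=
    closure_minimal (range_subset_iff.2 hpt)
      (isClosed_le ((continuous_const.mul (continuous_rpow_const (by linarith))).mul
        continuous_const) continuous_const)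
      (csSup_mem_closure (range_nonempty f) hbdd)
  have hpow : (p⁻¹ ^ n * M ^ (p - 1) * ∫ x, f x) ^ p⁻¹ =
      (p ^ (n / p))⁻¹ * ((∫ x, f x) ^ p⁻¹ * M ^ (1 - p⁻¹)) := by
    rw [mul_rpow (by positivity) hI, mul_rpow (by positivity) (by positivity), ← rpow_mul hM,
      inv_pow, inv_rpow (by positivity), ← rpow_natCast, ← rpow_mul hp0.le, sub_mul,
      mul_inv_cancel₀ hp0.ne', one_mul, div_eq_mul_inv]
    ring
  calc (∫ x, f x) ^ p⁻¹ * M ^ (1 - p⁻¹)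
      = p ^ (n / p) * (p⁻¹ ^ n * M ^ (p - 1) * ∫ x, f x) ^ p⁻¹ := by
        rw [hpow, mul_inv_cancel_left₀ (by positivity)]
    _ ≤ p ^ (n / p) * lpNorm p f := by
        rw [_root_.lpNorm, one_div]; gcongr; exact hsup

theorem div_pow_le_exp_one_pow_sub {n k : ℕ} (hkn : k ≤ n) :
    ((n : ℝ) / k) ^ k ≤ exp 1 ^ (n - k) := by
  rcases Nat.eq_zero_or_pos k with rfl | hk
  · simp
  have hk0 : (0 : ℝ) < k := Nat.cast_pos.2 hk
  calc ((n : ℝ) / k) ^ k ≤ exp ((n : ℝ) / k - 1) ^ k :=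
        pow_le_pow_left₀ (by positivity) (by linarith [add_one_le_exp ((n : ℝ) / k - 1)]) k
    _ = exp 1 ^ (n - k) := by
        rw [← exp_nat_mul, ← exp_nat_mul, mul_one, Nat.cast_sub hkn, mul_sub,
          mul_div_cancel₀ _ hk0.ne', mul_one]

theorem int_sup_le_lpNorm_general (n k : ℕ) (hk1 : 1 ≤ k) (hk2 : k ≤ n - 1)
    (f : Eucl n → ℝ) (hf : MemQ0 f) :
    (∫ x, f x) ^ ((k : ℝ) / n) * supNorm f ^ (((n : ℝ) - k) / n) ≤
        ((n : ℝ) / k) ^ k * lpNorm ((n : ℝ) / k) f ∧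
      ((n : ℝ) / k) ^ k ≤ Real.exp 1 ^ (n - k) ∧
      (∫ x, f x) ^ ((k : ℝ) / n) * supNorm f ^ (((n : ℝ) - k) / n) ≤
        Real.exp 1 ^ (n - k) * lpNorm ((n : ℝ) / k) f := by
  obtain ⟨hf0, hlc, -, hint, -⟩ := hf
  have hkn : k < n := by omega
  have hn0 : (n : ℝ) ≠ 0 := by exact_mod_cast (by omega : n ≠ 0)
  have hp : 1 < (n : ℝ) / k := (one_lt_div (by positivity)).2 (by exact_mod_cast hkn)
  have hmain := hlc.integral_rpow_mul_supNorm_rpow_le hf0 hint hp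
  rw [inv_div, one_sub_div hn0, div_div_cancel₀ hn0, rpow_natCast] at hmain
  have hexp := div_pow_le_exp_one_pow_sub hkn.le
  exact ⟨hmain, hexp, hmain.trans (by gcongr; exact lpNorm_nonneg hf0 _)⟩

/-- **Lemma 4.9**: for `f ∈ Q₀ⁿ` and `1 ≤ k ≤ n−1`,
`‖f‖₁^{k/n}·‖f‖_∞^{(n−k)/n} ≤ (n/k)^k·‖f‖_{n/k}`, and `(n/k)^k ≤ e^{n−k}`, hence
`‖f‖₁^{k/n}·‖f‖_∞^{(n−k)/n} ≤ e^{n−k}·‖f‖_{n/k}`. -/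
theorem int_sup_le_lpNorm (n k : ℕ) (hn : 2 ≤ n) (hk1 : 1 ≤ k) (hk2 : k ≤ n - 1)
    (f : Eucl n → ℝ) (hf : MemQ0 f) :
    (∫ x, f x) ^ ((k : ℝ) / n) * supNorm f ^ (((n : ℝ) - k) / n) ≤
        ((n : ℝ) / k) ^ k * lpNorm ((n : ℝ) / k) f ∧
      ((n : ℝ) / k) ^ k ≤ Real.exp 1 ^ (n - k) ∧
      (∫ x, f x) ^ ((k : ℝ) / n) * supNorm f ^ (((n : ℝ) - k) / n) ≤
        Real.exp 1 ^ (n - k) * lpNorm ((n : ℝ) / k) f :=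
  int_sup_le_lpNorm_general n k hk1 hk2 f hf
end
end

section
/- For all integers 1 ≤ k ≤ n one has ω_n^k ≤ ω_k^n, where ω_d denotes the Lebesgue volume of the Euclidean unit ball in ℝ^d; equivalently, Γ(k/2 + 1)^n ≤ Γ(n/2 + 1)^k. -/
open MeasureTheory

noncomputable section

abbrev OG (n : ℕ) := Matrix.orthogonalGroup (Fin n) ℝ

instance (n : ℕ) : MeasurableSpace (OG n) := borel _

def ballVol (d : ℕ) : ℝ := (volume (Metric.closedBall (0 : Eucl d) 1)).toReal

def stdSubspace (n k : ℕ) : Submodule ℝ (Eucl n) :=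
  Submodule.span ℝ {v | ∃ i : Fin n, (i : ℕ) < k ∧ v = EuclideanSpace.single i 1}

lemma gamma_key (n k : ℕ) (hk1 : 1 ≤ k) (hkn : k ≤ n) :
    Real.Gamma ((k : ℝ) / 2 + 1) ^ n ≤ Real.Gamma ((n : ℝ) / 2 + 1) ^ k := by
  have hkpos : (0:ℝ) < k := by exact_mod_cast hk1
  have hnpos : (0:ℝ) < n := lt_of_lt_of_le hkpos (by exact_mod_cast hkn)
  rcases eq_or_lt_of_le hkn with rfl | hlt
  · rfl
  have hlt' : (k:ℝ) < n := by exact_mod_cast hlt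
  have hgk : 0 < Real.Gamma ((k : ℝ) / 2 + 1) := Real.Gamma_pos_of_pos (by linarith)
  have hgn : 0 < Real.Gamma ((n : ℝ) / 2 + 1) := Real.Gamma_pos_of_pos (by linarith)
  have hc : ConvexOn ℝ (Set.Ioi 0) (Real.log ∘ Real.Gamma) := Real.convexOn_log_Gamma
  have h := hc.secant_mono (a := 1) (x := (k:ℝ)/2 + 1) (y := (n:ℝ)/2 + 1)
    (by norm_num) (by simp only [Set.mem_Ioi]; linarith) (by simp only [Set.mem_Ioi]; linarith)
    (by intro h; nlinarith [h]) (by intro h; nlinarith [h]) (by linarith)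
  simp only [Function.comp, Real.Gamma_one, Real.log_one, sub_zero, add_sub_cancel_right] at h
  have key : (n:ℝ) * Real.log (Real.Gamma ((k : ℝ) / 2 + 1)) ≤
      (k:ℝ) * Real.log (Real.Gamma ((n : ℝ) / 2 + 1)) := by
    rw [div_le_div_iff₀ (by linarith) (by linarith)] at h
    nlinarith [h]
  have := Real.exp_le_exp.mpr key
  rw [mul_comm (n:ℝ), mul_comm (k:ℝ), Real.exp_mul, Real.exp_mul,
    Real.exp_log hgk, Real.exp_log hgn] at this
  calc Real.Gamma ((k : ℝ) / 2 + 1) ^ n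
      = Real.Gamma ((k : ℝ) / 2 + 1) ^ (n:ℝ) := by rw [Real.rpow_natCast]
    _ ≤ Real.Gamma ((n : ℝ) / 2 + 1) ^ (k:ℝ) := this
    _ = Real.Gamma ((n : ℝ) / 2 + 1) ^ k := by rw [Real.rpow_natCast]

/-- For all `1 ≤ k ≤ n` one has `ω_nᵏ ≤ ω_kⁿ`; equivalently
`Γ(k/2+1)ⁿ ≤ Γ(n/2+1)ᵏ`. -/
theorem ballVol_pow_le (n k : ℕ) (hk1 : 1 ≤ k) (hkn : k ≤ n) :
    ballVol n ^ k ≤ ballVol k ^ n ∧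
      Real.Gamma ((k : ℝ) / 2 + 1) ^ n ≤ Real.Gamma ((n : ℝ) / 2 + 1) ^ k := by
  have hG := gamma_key n k hk1 hkn
  refine ⟨?_, hG⟩
  have hvol : ∀ d : ℕ, 0 < d → ballVol d = Real.sqrt Real.pi ^ d / Real.Gamma ((d:ℝ) / 2 + 1) := by
    intro d hd
    haveI : Nonempty (Fin d) := ⟨⟨0, hd⟩⟩
    rw [ballVol, EuclideanSpace.volume_closedBall]
    have hpos : (0:ℝ) ≤ Real.sqrt Real.pi ^ d / Real.Gamma ((d:ℝ) / 2 + 1) :=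
      div_nonneg (by positivity) (Real.Gamma_pos_of_pos (by positivity)).le
    simp [ENNReal.toReal_mul, ENNReal.toReal_ofReal, hpos]
  rw [hvol n (lt_of_lt_of_le hk1 hkn), hvol k hk1]
  have hgk : 0 < Real.Gamma ((k : ℝ) / 2 + 1) := Real.Gamma_pos_of_pos (by positivity)
  have hgn : 0 < Real.Gamma ((n : ℝ) / 2 + 1) := Real.Gamma_pos_of_pos (by positivity)
  rw [div_pow, div_pow, div_le_div_iff₀ (by positivity) (by positivity)]
  rw [← pow_mul, ← pow_mul, Nat.mul_comm n k]
  exact mul_le_mul_of_nonneg_left hG (by positivity)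
end
end
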